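/- arXiv:2001.11440 — 4 statements merged into one kernel-verified Lean document; each statement's English description precedes it below -/
import Mathlib

section
/- Let Θ, α₀, α₁, β, γ be nonzero complex numbers satisfying: α₀²Θ² = 1; α₁²Θ² = Θ; γ²Θ² = (α₁βγ)²Θ³; β²Θ² = −(α₁γ)³Θ³; and (α₀α₁βγ)³ = α₁⁸. Then for every q ∈ ℂ with q² = γ one has α₁ = −q⁻⁶, β² = 1, α₀β = −α₁² = −q⁻¹²; in particular either (β, α₀) = (−1, q⁻¹²) or (β, α₀) = (1, −q⁻¹²). -/
/-!
Cancelling `Θ` from `α₁²Θ² = Θ` gives `α₁²Θ = 1`, and with this normalisation the remaining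
relations collapse to `α₀² = α₁⁴`, `β² = 1`, `α₁γ³ = -1` and `(α₀β)³ = -α₁⁶`. Hence `α₀β` and
`-α₁²` have the same square and the same cube, so they are equal; writing `γ = q²` turns
`α₁γ³ = -1` into `α₁ = -q⁻⁶`, and `β = ±1` fixes `α₀`.
-/

section

variable {K : Type*} [Field K]

theorem eq_of_sq_eq_sq_of_pow_three_eq {x y : K} (hy : y ≠ 0) (h₂ : x ^ 2 = y ^ 2)
    (h₃ : x ^ 3 = y ^ 3) : x = y :=
  mul_right_cancel₀ (pow_ne_zero 2 hy) <| by linear_combination -x * h₂ + h₃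

theorem eq_neg_inv_pow_of_mul_pow_eq_neg_one {a q : K} {n : ℕ} (h : a * q ^ n = -1) :
    a = -(q⁻¹) ^ n := by
  have hq : q ^ n ≠ 0 := right_ne_zero_of_mul (h ▸ neg_ne_zero.mpr one_ne_zero)
  rw [inv_pow, eq_neg_iff_add_eq_zero, ← mul_left_inj' hq, add_mul, h, inv_mul_cancel₀ hq]
  ring

variable {Θ α₀ α₁ β γ : K}

theorem g2_braiding_relations (hγ : γ ≠ 0)
    (h1 : α₀ ^ 2 * Θ ^ 2 = 1)
    (h2 : α₁ ^ 2 * Θ ^ 2 = Θ)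
    (h3 : γ ^ 2 * Θ ^ 2 = (α₁ * β * γ) ^ 2 * Θ ^ 3)
    (h4 : β ^ 2 * Θ ^ 2 = -(α₁ * γ) ^ 3 * Θ ^ 3)
    (h5 : (α₀ * α₁ * β * γ) ^ 3 = α₁ ^ 8) :
    β ^ 2 = 1 ∧ α₁ * γ ^ 3 = -1 ∧ α₀ * β = -α₁ ^ 2 := by
  have hΘ₂ : Θ ^ 2 ≠ 0 := right_ne_zero_of_mul_eq_one h1
  have hΘ : Θ ≠ 0 := ne_zero_pow two_ne_zero hΘ₂
  have hnorm : α₁ ^ 2 * Θ = 1 :=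
    mul_right_cancel₀ hΘ <| by linear_combination h2
  have hα₁₂ : α₁ ^ 2 ≠ 0 := left_ne_zero_of_mul_eq_one hnorm
  have hβ : β ^ 2 = 1 :=
    mul_right_cancel₀ (mul_ne_zero (pow_ne_zero 2 hγ) hΘ₂) <| by
      linear_combination -h3 - β ^ 2 * γ ^ 2 * Θ ^ 2 * hnorm
  have hγ₃ : α₁ * γ ^ 3 = -1 :=
    mul_right_cancel₀ hΘ₂ <| by
      linear_combination h4 - Θ ^ 2 * hβ - α₁ * γ ^ 3 * Θ ^ 2 * hnorm
  have hα₀ : α₀ ^ 2 = α₁ ^ 4 :=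
    mul_right_cancel₀ hΘ₂ <| by linear_combination h1 - (α₁ ^ 2 * Θ + 1) * hnorm
  have hcube : (α₀ * β) ^ 3 = -α₁ ^ 6 :=
    mul_right_cancel₀ hα₁₂ <| by
      linear_combination -h5 + α₀ ^ 3 * β ^ 3 * α₁ ^ 2 * hγ₃
  refine ⟨hβ, hγ₃, eq_of_sq_eq_sq_of_pow_three_eq (neg_ne_zero.mpr hα₁₂) ?_ (by rw [hcube]; ring)⟩
  linear_combination β ^ 2 * hα₀ + α₁ ^ 4 * hβ

end

theorem g2_eigenvalues_general (Θ α₀ α₁ β γ : ℂ)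
    (hγ : γ ≠ 0)
    (h1 : α₀ ^ 2 * Θ ^ 2 = 1)
    (h2 : α₁ ^ 2 * Θ ^ 2 = Θ)
    (h3 : γ ^ 2 * Θ ^ 2 = (α₁ * β * γ) ^ 2 * Θ ^ 3)
    (h4 : β ^ 2 * Θ ^ 2 = -(α₁ * γ) ^ 3 * Θ ^ 3)
    (h5 : (α₀ * α₁ * β * γ) ^ 3 = α₁ ^ 8) :
    ∀ q : ℂ, q ^ 2 = γ →
      α₁ = -(q⁻¹) ^ 6 ∧ β ^ 2 = 1 ∧ α₀ * β = -α₁ ^ 2 ∧ α₀ * β = -(q⁻¹) ^ 12 ∧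
        ((β = -1 ∧ α₀ = (q⁻¹) ^ 12) ∨ (β = 1 ∧ α₀ = -(q⁻¹) ^ 12)) := by
  intro q rfl
  obtain ⟨hβ, hγ₃, hα₀β⟩ := g2_braiding_relations hγ h1 h2 h3 h4 h5
  have hα₁q : α₁ = -(q⁻¹) ^ 6 :=
    eq_neg_inv_pow_of_mul_pow_eq_neg_one (by linear_combination hγ₃)
  have hα₀βq : α₀ * β = -(q⁻¹) ^ 12 := by rw [hα₀β, hα₁q]; ring
  refine ⟨hα₁q, hβ, hα₀β, hα₀βq, ?_⟩
  rcases sq_eq_one_iff.mp hβ with rfl | rfl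
  · exact Or.inr ⟨rfl, by simpa using hα₀βq⟩
  · exact Or.inl ⟨rfl, by linear_combination -hα₀βq⟩

/-- the numerical content of the eigenvalue computation for a ribbon category
of type `G₂`: `Θ` is the twist of `V` and `α₀, α₁, β, γ` are the eigenvalues of the braiding
`c_{V,V}` on the summands `1, V, V_{Λ₂}, V_{2Λ₁}` of `V ⊗ V`. -/
theorem g2_eigenvalues (Θ α₀ α₁ β γ : ℂ)
    (hΘ : Θ ≠ 0) (hα₀ : α₀ ≠ 0) (hα₁ : α₁ ≠ 0) (hβ : β ≠ 0) (hγ : γ ≠ 0)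
    (h1 : α₀ ^ 2 * Θ ^ 2 = 1)
    (h2 : α₁ ^ 2 * Θ ^ 2 = Θ)
    (h3 : γ ^ 2 * Θ ^ 2 = (α₁ * β * γ) ^ 2 * Θ ^ 3)
    (h4 : β ^ 2 * Θ ^ 2 = -(α₁ * γ) ^ 3 * Θ ^ 3)
    (h5 : (α₀ * α₁ * β * γ) ^ 3 = α₁ ^ 8) :
    ∀ q : ℂ, q ^ 2 = γ →
      α₁ = -(q⁻¹) ^ 6 ∧ β ^ 2 = 1 ∧ α₀ * β = -α₁ ^ 2 ∧ α₀ * β = -(q⁻¹) ^ 12 ∧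
        ((β = -1 ∧ α₀ = (q⁻¹) ^ 12) ∨ (β = 1 ∧ α₀ = -(q⁻¹) ^ 12)) :=
  g2_eigenvalues_general Θ α₀ α₁ β γ hγ h1 h2 h3 h4 h5
end

section
/- Let ρ : B₃ → GL₂(ℂ) be an irreducible 2-dimensional representation of the braid group B₃ such that ρ(σ₁) is diagonalizable with eigenvalues α₁, α₂ and such that ρ(Δ₃²) = z·I for a scalar z ∈ ℂ. Then z = −(α₁α₂)³. -/
/-- The braid relations on `m` generators (standing for `σ_1,…,σ_m`). -/
def braidRels (m : ℕ) : Set (FreeGroup (Fin m)) :=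
  { r | (∃ i j : Fin m, (i : ℕ) + 1 = (j : ℕ) ∧
          r = FreeGroup.of i * FreeGroup.of j * FreeGroup.of i *
              (FreeGroup.of j * FreeGroup.of i * FreeGroup.of j)⁻¹) ∨
        (∃ i j : Fin m, (i : ℕ) + 2 ≤ (j : ℕ) ∧
          r = FreeGroup.of i * FreeGroup.of j * (FreeGroup.of j * FreeGroup.of i)⁻¹) }

/-- Artin's braid group `B_n`, with generators `σ_1,…,σ_{n-1}`. -/
def BraidGroup (n : ℕ) : Type := PresentedGroup (braidRels (n - 1))

instance (n : ℕ) : Group (BraidGroup n) := by unfold BraidGroup; infer_instance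

/-- The generator `σ_{i+1}` of the braid group `B_n`, for `i : Fin (n-1)`. -/
def braidGen {n : ℕ} (i : Fin (n - 1)) : BraidGroup n := PresentedGroup.of i

/-- The central element `Δ_n² = (σ_1 σ_2 ⋯ σ_{n-1})^n` of `B_n`. -/
def deltaSq (n : ℕ) : BraidGroup n := ((List.ofFn (fun i : Fin (n-1) => braidGen i)).prod) ^ n

/-- Irreducibility of a matrix representation: the only invariant subspaces of `ℂ^m`
are `⊥` and `⊤`. -/
def IsIrreducibleRep {G : Type*} [Group G] {m : ℕ}
    (ρ : G →* Matrix.GeneralLinearGroup (Fin m) ℂ) : Prop :=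
  ∀ U : Submodule ℂ (Fin m → ℂ),
    (∀ g : G, ∀ x ∈ U, (ρ g : Matrix (Fin m) (Fin m) ℂ).mulVec x ∈ U) → U = ⊥ ∨ U = ⊤


/-!
Write `A = ρ(σ₁)`, `B = ρ(σ₂)` and `P = ABA = BAB`. Then `P² = (AB)³ = z·I` and `PA = BP`.
If `P` were scalar, this would force `A = B`, so `ρ` would have cyclic image and an eigenvector
of `A` would span an invariant line, contradicting irreducibility. By Cayley–Hamilton a
non-scalar `2 × 2` matrix with scalar square has trace zero, so `P² = -det P · I` and
`z = -det P = -(det A)³`, since the braid relation makes `A` and `B` conjugate.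
-/

open Matrix

lemma braidGen_mul_braidGen_mul_braidGen {n : ℕ} (i j : Fin (n - 1)) (hij : (i : ℕ) + 1 = j) :
    braidGen i * braidGen j * braidGen i =
      (braidGen j * braidGen i * braidGen j : BraidGroup n) := by
  have h := PresentedGroup.mk_eq_mk_of_mul_inv_mem (rels := braidRels (n - 1))
    (Or.inl ⟨i, j, hij, rfl⟩)
  simp only [map_mul] at h
  exact h

lemma deltaSq_three : deltaSq 3 = (braidGen 0 * braidGen 1) ^ 3 := by
  simp [deltaSq, List.ofFn_succ]

lemma range_le_zpowers_of_map_braidGen_eq {n : ℕ} {H : Type*} [Group H]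
    (ρ : BraidGroup n →* H) (a : H) (h : ∀ i, ρ (braidGen i) = a) :
    ρ.range ≤ Subgroup.zpowers a := by
  rintro _ ⟨g, rfl⟩
  exact PresentedGroup.generated_by _ ((Subgroup.zpowers a).comap ρ)
    (fun i => (h i).symm ▸ Subgroup.mem_zpowers a) g

lemma Matrix.mul_self_eq_trace_smul_sub_det_smul_fin_two {R : Type*} [CommRing R]
    (M : Matrix (Fin 2) (Fin 2) R) : M * M = M.trace • M - M.det • 1 := by
  ext i j
  fin_cases i <;> fin_cases j <;>
    simp [mul_apply, Fin.sum_univ_two, trace_fin_two, det_fin_two] <;> ring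

lemma Matrix.eq_neg_det_of_mul_self_eq_smul_one {K : Type*} [Field K]
    {P : Matrix (Fin 2) (Fin 2) K} {z : K} (h : P * P = z • 1) (hP : ∀ d : K, P ≠ d • 1) :
    z = -P.det := by
  have hch := P.mul_self_eq_trace_smul_sub_det_smul_fin_two
  rw [h] at hch
  have htr : P.trace = 0 := by
    by_contra ht
    apply hP ((z + P.det) / P.trace)
    rw [div_eq_inv_mul, ← smul_smul, add_smul, hch, sub_add_cancel, smul_smul,
      inv_mul_cancel₀ ht, one_smul]
  rw [htr, zero_smul, zero_sub, ← neg_smul] at hch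
  simpa using congrFun (congrFun hch 0) 0

namespace Matrix.GeneralLinearGroup

variable {n : Type*} [Fintype n] [DecidableEq n]

lemma det_eq_of_braid {R : Type*} [CommRing R] {a b : GL n R} (hab : a * b * a = b * a * b) :
    (b : Matrix n n R).det = (a : Matrix n n R).det := by
  have hconj : IsConj a b := isConj_iff.2 ⟨a * b, by rw [hab]; group⟩
  have := isConj_iff_eq.1 (det.map_isConj hconj)
  simpa using congrArg Units.val this.symm

variable {K : Type*} [Field K]

lemma mulVec_inv_of_mulVec_eq_smul (a : GL n K) {v : n → K} {c : K}
    (h : (a : Matrix n n K) *ᵥ v = c • v) : ((a⁻¹ : GL n K) : Matrix n n K) *ᵥ v = c⁻¹ • v := by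
  have hv : v = c • ((a⁻¹ : GL n K) : Matrix n n K) *ᵥ v := by
    rw [← mulVec_smul, ← h, mulVec_mulVec, ← Units.val_mul, inv_mul_cancel, Units.val_one,
      one_mulVec]
  rcases eq_or_ne c 0 with rfl | hc
  · rw [zero_smul] at hv
    simp [hv]
  · rw [hv, smul_smul, inv_mul_cancel₀ hc, one_smul, ← hv]

lemma mulVec_zpow_of_mulVec_eq_smul (a : GL n K) {v : n → K} {c : K}
    (h : (a : Matrix n n K) *ᵥ v = c • v) (k : ℤ) :
    ((a ^ k : GL n K) : Matrix n n K) *ᵥ v = c ^ k • v := by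
  rcases eq_or_ne c 0 with rfl | hc
  · obtain rfl : v = 0 := mulVec_injective_of_isUnit a.isUnit (by rw [h, zero_smul, mulVec_zero])
    simp
  induction k using Int.induction_on with
  | zero => simp
  | succ k ih =>
    rw [_root_.zpow_add_one, Units.val_mul, ← mulVec_mulVec, h, mulVec_smul, ih, smul_smul,
      zpow_add_one₀ hc, mul_comm]
  | pred k ih =>
    rw [_root_.zpow_sub_one, Units.val_mul, ← mulVec_mulVec, mulVec_inv_of_mulVec_eq_smul a h,
      mulVec_smul, ih, smul_smul, zpow_sub_one₀ hc, mul_comm]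

lemma eq_of_braid_of_eq_smul_one [Nonempty n] {a b : GL n K} (hab : a * b * a = b * a * b)
    {d : K} (hP : ((a * b * a : GL n K) : Matrix n n K) = d • 1) : a = b := by
  have hPa : ((a * b * a : GL n K) : Matrix n n K) * a = b * (a * b * a : GL n K) := by
    rw [← Units.val_mul, ← Units.val_mul]
    nth_rewrite 1 [hab]
    simp only [mul_assoc]
  rw [hP, smul_mul_assoc, one_mul, mul_smul_comm, mul_one] at hPa
  have hd : d ≠ 0 := by
    rintro rfl
    exact (a * b * a).ne_zero (by rw [hP, zero_smul])
  exact Units.ext (smul_right_injective _ hd hPa)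

lemma eq_neg_det_pow_three_of_braid {a b : GL (Fin 2) K} (hab : a * b * a = b * a * b)
    (hne : a ≠ b) {z : K}
    (hz : (((a * b) ^ 3 : GL (Fin 2) K) : Matrix (Fin 2) (Fin 2) K) = z • 1) :
    z = -(a : Matrix (Fin 2) (Fin 2) K).det ^ 3 := by
  have hsq : ((a * b * a : GL (Fin 2) K) : Matrix (Fin 2) (Fin 2) K) * (a * b * a : GL (Fin 2) K)
      = z • 1 := by
    rw [← hz, ← Units.val_mul]
    nth_rewrite 2 [hab]
    simp only [pow_succ, pow_zero, one_mul, mul_assoc]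
  rw [eq_neg_det_of_mul_self_eq_smul_one hsq fun d hd => hne (eq_of_braid_of_eq_smul_one hab hd)]
  simp only [Units.val_mul, det_mul, det_eq_of_braid hab]
  ring

end Matrix.GeneralLinearGroup

lemma not_isIrreducibleRep_of_range_le_zpowers {G : Type*} [Group G] {m : ℕ} (hm : 2 ≤ m)
    (ρ : G →* GL (Fin m) ℂ) (a : GL (Fin m) ℂ) (h : ρ.range ≤ Subgroup.zpowers a) :
    ¬ IsIrreducibleRep ρ := by
  have : Nonempty (Fin m) := ⟨⟨0, by omega⟩⟩
  obtain ⟨c, hc⟩ := Module.End.exists_eigenvalue (toLin' (a : Matrix (Fin m) (Fin m) ℂ))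
  obtain ⟨v, hv⟩ := hc.exists_hasEigenvector
  have hav : (a : Matrix (Fin m) (Fin m) ℂ) *ᵥ v = c • v := by simpa using hv.apply_eq_smul
  have hline : ∀ g x, x ∈ ℂ ∙ v → (ρ g : Matrix (Fin m) (Fin m) ℂ) *ᵥ x ∈ ℂ ∙ v := by
    intro g x hx
    obtain ⟨k, hk⟩ := Subgroup.mem_zpowers_iff.1 (h ⟨g, rfl⟩)
    obtain ⟨d, rfl⟩ := Submodule.mem_span_singleton.1 hx
    rw [← hk, mulVec_smul, GeneralLinearGroup.mulVec_zpow_of_mulVec_eq_smul a hav, smul_smul]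
    exact Submodule.smul_mem _ _ (Submodule.mem_span_singleton_self v)
  intro hirr
  rcases hirr (ℂ ∙ v) hline with hbot | htop
  · exact hv.2 (Submodule.span_singleton_eq_bot.1 hbot)
  · have := finrank_span_singleton (K := ℂ) hv.2
    rw [htop, finrank_top, Module.finrank_fin_fun] at this
    omega

/-- for an irreducible 2-dimensional representation of `B₃` with `ρ(σ₁)`
diagonalizable with eigenvalues `α₁, α₂` and `ρ(Δ₃²) = z·I`, one has `z = -(α₁α₂)³`. -/
theorem braid3_scalar_dim2 (ρ : BraidGroup 3 →* Matrix.GeneralLinearGroup (Fin 2) ℂ)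
    (hirr : IsIrreducibleRep ρ) (α₁ α₂ : ℂ)
    (hdiag : ∃ C : Matrix.GeneralLinearGroup (Fin 2) ℂ,
      (ρ (braidGen 0) : Matrix (Fin 2) (Fin 2) ℂ) =
        (C : Matrix (Fin 2) (Fin 2) ℂ) * Matrix.diagonal ![α₁, α₂] * (C⁻¹ : Matrix (Fin 2) (Fin 2) ℂ))
    (z : ℂ)
    (hz : (ρ (deltaSq 3) : Matrix (Fin 2) (Fin 2) ℂ) = z • (1 : Matrix (Fin 2) (Fin 2) ℂ)) :
    z = -(α₁ * α₂) ^ 3 := by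
  obtain ⟨C, hC⟩ := hdiag
  have hdet : (ρ (braidGen 0) : Matrix (Fin 2) (Fin 2) ℂ).det = α₁ * α₂ := by
    rw [hC, det_conj C.isUnit, det_diagonal, Fin.prod_univ_two]
    rfl
  have hrel : ρ (braidGen 0) * ρ (braidGen 1) * ρ (braidGen 0)
      = ρ (braidGen 1) * ρ (braidGen 0) * ρ (braidGen 1) := by
    simpa using congrArg ρ (braidGen_mul_braidGen_mul_braidGen (n := 3) 0 1 rfl)
  have hne : ρ (braidGen 0) ≠ ρ (braidGen 1) := fun h =>
    not_isIrreducibleRep_of_range_le_zpowers le_rfl ρ _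
      (range_le_zpowers_of_map_braidGen_eq ρ _ fun i => by fin_cases i <;> [rfl; exact h.symm])
      hirr
  rw [deltaSq_three, map_pow, map_mul] at hz
  rw [GeneralLinearGroup.eq_neg_det_pow_three_of_braid hrel hne hz, hdet]
end

section
/- Let ρ : B₃ → GL₃(ℂ) be an irreducible 3-dimensional representation of the braid group B₃ such that ρ(σ₁) is diagonalizable with eigenvalues α₁, α₂, α₃ and such that ρ(Δ₃²) = z·I for a scalar z ∈ ℂ. Then z = (α₁α₂α₃)². -/
/-!
Put `Q = ρ(σ₁σ₂)` and `Y = ρ(σ₁σ₂σ₁)`, so that `Q³ = Y² = ρ(Δ₃²) = z`. As `σ₂` is conjugate to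
`σ₁`, `det Q = (det ρ(σ₁))² = (α₁α₂α₃)²`, and it remains to show `det Q = z`.

Since `(Y - s)(Y + s) = 0` for `s² = z`, some eigenspace of `Y` is at least a plane. An eigenspace
of `Q` of dimension at least 2 would meet it in `ℂ³`, and a common eigenvector of `Q` and `Y` spans
a line invariant under `σ₁ = (σ₁σ₂)⁻¹(σ₁σ₂σ₁)` and `σ₂`. So, by irreducibility, every eigenspace of
`Q` is at most a line. But `Q` is killed by `X³ - z = ∏ᵢ (X - ζⁱc)`, so Sylvester's nullity
inequality makes each of the three distinct cube roots `ζⁱc` of `z ≠ 0` an eigenvalue of `Q`.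
Hence the characteristic polynomial of `Q` is `X³ - z` and `det Q = z`.
-/

open Polynomial Module Matrix

section LinearAlgebra

variable {K V : Type*} [Field K] [AddCommGroup V] [Module K V] [FiniteDimensional K V]

theorem LinearMap.finrank_ker_comp_le {W U : Type*} [AddCommGroup W] [Module K W]
    [FiniteDimensional K W] [AddCommGroup U] [Module K U] (f : W →ₗ[K] U) (g : V →ₗ[K] W) :
    finrank K (ker (f ∘ₗ g)) ≤ finrank K (ker f) + finrank K (ker g) := by
  set h := g.domRestrict (ker (f ∘ₗ g))
  have hrange : range h ≤ ker f := by
    rintro _ ⟨x, rfl⟩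
    exact x.2
  have hker : finrank K (ker h) = finrank K (ker g) := by
    rw [ker_domRestrict]
    exact (Submodule.comapSubtypeEquivOfLe (ker_le_ker_comp g f)).finrank_eq
  rw [← h.finrank_range_add_finrank_ker, hker]
  exact Nat.add_le_add_right (Submodule.finrank_mono hrange) _

namespace Module.End

theorem finrank_ker_aeval_prod_le {ι : Type*} (f : End K V) (s : Finset ι) (p : ι → K[X]) :
    finrank K (LinearMap.ker (aeval f (∏ i ∈ s, p i))) ≤
      ∑ i ∈ s, finrank K (LinearMap.ker (aeval f (p i))) := by
  classical
  induction s using Finset.induction_on with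
  | empty =>
    rw [Finset.sum_empty, Finset.prod_empty, map_one, one_eq_id, LinearMap.ker_id, finrank_bot]
  | insert i s hi ih =>
    rw [Finset.prod_insert hi, Finset.sum_insert hi, map_mul, mul_eq_comp]
    exact (LinearMap.finrank_ker_comp_le _ _).trans (Nat.add_le_add_left ih _)

variable {f : End K V} {n : ℕ} [NeZero n] {ζ c : K}

theorem finrank_le_sum_finrank_eigenspace (hζ : IsPrimitiveRoot ζ n)
    (hf : f ^ n = algebraMap K (End K V) (c ^ n)) :
    finrank K V ≤ ∑ i ∈ Finset.range n, finrank K (f.eigenspace (ζ ^ i * c)) := by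
  have hzero : aeval f (X ^ n - C (c ^ n)) = 0 := by simp [hf]
  have hker (μ : K) : LinearMap.ker (aeval f (X - C μ)) = f.eigenspace μ := by
    rw [eigenspace_def, map_sub, aeval_X, aeval_C, Algebra.algebraMap_eq_smul_one]
  have h := finrank_ker_aeval_prod_le f (Finset.range n) fun i ↦ X - C (ζ ^ i * c)
  rw [← X_pow_sub_C_eq_prod hζ (Nat.pos_of_neZero n) rfl, hzero, LinearMap.ker_zero,
    finrank_top] at h
  exact h.trans_eq (Finset.sum_congr rfl fun i _ ↦ by rw [hker])

theorem hasEigenvalue_of_pow_eq_of_finrank_eigenspace_le_one (hV : finrank K V = n)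
    (hζ : IsPrimitiveRoot ζ n)
    (hf : f ^ n = algebraMap K (End K V) (c ^ n)) (hf1 : ∀ μ, finrank K (f.eigenspace μ) ≤ 1)
    {i : ℕ} (hi : i < n) : f.HasEigenvalue (ζ ^ i * c) := by
  by_contra h
  rw [hasEigenvalue_iff, not_not] at h
  have hlt : ∑ j ∈ Finset.range n, finrank K (f.eigenspace (ζ ^ j * c)) <
      ∑ j ∈ Finset.range n, 1 :=
    Finset.sum_lt_sum (fun j _ ↦ hf1 _) ⟨i, Finset.mem_range.2 hi, by simp [h]⟩
  have := finrank_le_sum_finrank_eigenspace hζ hf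
  simp only [Finset.sum_const, Finset.card_range, smul_eq_mul, mul_one] at hlt
  omega

theorem charpoly_eq_X_pow_sub_C (hV : finrank K V = n) (hζ : IsPrimitiveRoot ζ n) (hc : c ≠ 0)
    (hf : f ^ n = algebraMap K (End K V) (c ^ n)) (hf1 : ∀ μ, finrank K (f.eigenspace μ) ≤ 1) :
    f.charpoly = X ^ n - C (c ^ n) := by
  have hn : 0 < n := Nat.pos_of_neZero n
  have hdeg : f.charpoly.degree = n := by
    rw [degree_eq_natDegree f.charpoly_monic.ne_zero, LinearMap.charpoly_natDegree, hV]
  refine eq_of_degree_sub_lt_of_eval_index_eq _ (hζ.injOn_pow_mul hc) ?_ fun i hi ↦ ?_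
  · rw [Finset.card_range, ← hdeg]
    refine degree_sub_lt_left ?_ f.charpoly_monic.ne_zero ?_
    · rw [hdeg, degree_X_pow_sub_C hn]
    · rw [f.charpoly_monic.leadingCoeff, (monic_X_pow_sub_C _ hn.ne').leadingCoeff]
  · have hroot := (hasEigenvalue_iff_isRoot_charpoly _ _).1 <|
      hasEigenvalue_of_pow_eq_of_finrank_eigenspace_le_one hV hζ hf hf1 (Finset.mem_range.1 hi)
    rw [hroot.eq_zero]
    simp [mul_pow, ← pow_mul, pow_mul', hζ.pow_eq_one]

end Module.End

end LinearAlgebra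

local notation "σ₁" => (braidGen 0 : BraidGroup 3)
local notation "σ₂" => (braidGen 1 : BraidGroup 3)

theorem braidGen_braid : σ₁ * σ₂ * σ₁ = σ₂ * σ₁ * σ₂ := by
  have h := PresentedGroup.mk_eq_mk_of_mul_inv_mem (rels := braidRels 2) (Or.inl ⟨0, 1, rfl, rfl⟩)
  simp only [map_mul] at h
  exact h

theorem deltaSq_three_eq_cube : deltaSq 3 = (σ₁ * σ₂) ^ 3 := by
  simp [deltaSq, List.ofFn_succ]

theorem deltaSq_three_eq_sq : deltaSq 3 = (σ₁ * σ₂ * σ₁) ^ 2 :=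
  calc deltaSq 3 = (σ₁ * σ₂ * σ₁) * (σ₂ * σ₁ * σ₂) := by
        rw [deltaSq_three_eq_cube]; simp only [pow_succ, pow_zero, one_mul, mul_assoc]
    _ = (σ₁ * σ₂ * σ₁) ^ 2 := by rw [← braidGen_braid, sq]

theorem closure_braidGen_products_eq_top : Subgroup.closure {σ₁ * σ₂, σ₁ * σ₂ * σ₁} = ⊤ := by
  set H := Subgroup.closure {σ₁ * σ₂, σ₁ * σ₂ * σ₁}
  have hx : σ₁ * σ₂ ∈ H := Subgroup.subset_closure (by simp)
  have hy : σ₁ * σ₂ * σ₁ ∈ H := Subgroup.subset_closure (by simp)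
  have hσ₁ : σ₁ ∈ H := by
    have h := H.mul_mem (H.inv_mem hx) hy
    rwa [show (σ₁ * σ₂)⁻¹ * (σ₁ * σ₂ * σ₁) = σ₁ by group] at h
  have hσ₂ : σ₂ ∈ H := by
    have h := H.mul_mem (H.inv_mem hσ₁) hx
    rwa [show σ₁⁻¹ * (σ₁ * σ₂) = σ₂ by group] at h
  refine eq_top_iff.2 fun g _ ↦ PresentedGroup.generated_by (braidRels 2) H (fun j ↦ ?_) g
  fin_cases j
  exacts [hσ₁, hσ₂]

theorem map_braidGen_one_eq_map_braidGen_zero {M : Type*} [CommGroup M] (χ : BraidGroup 3 →* M) :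
    χ σ₂ = χ σ₁ := by
  have h := congrArg χ braidGen_braid
  simp only [map_mul] at h
  have h' : χ σ₁ * (χ σ₁ * χ σ₂) = χ σ₂ * (χ σ₁ * χ σ₂) := by
    rw [← mul_assoc, ← mul_assoc, mul_right_comm, h]
  exact (mul_right_cancel h').symm

theorem det_map_braidGen_mul_braidGen {ι R : Type*} [Fintype ι] [DecidableEq ι] [CommRing R]
    (ρ : BraidGroup 3 →* GL ι R) :
    (ρ (σ₁ * σ₂) : Matrix ι ι R).det = (ρ σ₁ : Matrix ι ι R).det ^ 2 := by
  have h := congrArg Units.val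
    (map_braidGen_one_eq_map_braidGen_zero (GeneralLinearGroup.det.comp ρ))
  simp only [MonoidHom.coe_comp, Function.comp_apply, GeneralLinearGroup.val_det_apply] at h
  rw [map_mul, Units.val_mul, det_mul, h, sq]

theorem not_isIrreducibleRep_of_forall_mulVec_eq_smul {G : Type*} [Group G] {m : ℕ}
    (hm : 2 ≤ m) (ρ : G →* GL (Fin m) ℂ) {s : Set G} (hs : Subgroup.closure s = ⊤)
    {v : Fin m → ℂ} (hv : v ≠ 0)
    (hsv : ∀ g ∈ s, ∃ c : ℂ, (ρ g : Matrix (Fin m) (Fin m) ℂ) *ᵥ v = c • v) :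
    ¬ IsIrreducibleRep ρ := by
  have hall (g : G) : ∃ c : ℂ, (ρ g : Matrix (Fin m) (Fin m) ℂ) *ᵥ v = c • v := by
    induction (hs ▸ Subgroup.mem_top g : g ∈ Subgroup.closure s)
      using Subgroup.closure_induction with
    | mem g hg => exact hsv g hg
    | one => exact ⟨1, by simp⟩
    | mul g h _ _ hg hh =>
      obtain ⟨a, ha⟩ := hg
      obtain ⟨b, hb⟩ := hh
      exact ⟨a * b, by rw [map_mul, Units.val_mul, ← mulVec_mulVec, hb, mulVec_smul, ha, smul_smul,
        mul_comm]⟩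
    | inv g _ hg =>
      obtain ⟨a, ha⟩ := hg
      have hv' : a • (ρ g⁻¹ : Matrix (Fin m) (Fin m) ℂ) *ᵥ v = v := by
        rw [← mulVec_smul, ← ha, mulVec_mulVec, ← Units.val_mul, ← map_mul, inv_mul_cancel,
          map_one, Units.val_one, one_mulVec]
      have ha0 : a ≠ 0 := by
        rintro rfl
        exact hv (by simpa using hv'.symm)
      exact ⟨a⁻¹, by rw [← hv', smul_smul, inv_mul_cancel₀ ha0, one_smul, hv']⟩
  have hspan (g : G) : ∀ x ∈ Submodule.span ℂ {v},
      (ρ g : Matrix (Fin m) (Fin m) ℂ) *ᵥ x ∈ Submodule.span ℂ {v} := by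
    intro x hx
    obtain ⟨a, rfl⟩ := Submodule.mem_span_singleton.1 hx
    obtain ⟨c, hc⟩ := hall g
    rw [mulVec_smul, hc, smul_smul]
    exact Submodule.mem_span_singleton.2 ⟨a * c, rfl⟩
  intro hirr
  rcases hirr _ hspan with h | h
  · exact hv (by simpa using h)
  · have := finrank_span_singleton (K := ℂ) hv
    rw [h, finrank_top, finrank_fin_fun] at this
    omega

theorem toLinAlgEquiv'_pow_eq_algebraMap {K ι : Type*} [Field K] [Fintype ι] [DecidableEq ι]
    {M : Matrix ι ι K} {k : ℕ} {z : K} (h : M ^ k = z • 1) :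
    toLinAlgEquiv' M ^ k = algebraMap K (End K (ι → K)) z := by
  rw [← map_pow, h, ← Algebra.algebraMap_eq_smul_one, AlgEquiv.commutes]

theorem IsIrreducibleRep.finrank_eigenspace_le_one {ρ : BraidGroup 3 →* GL (Fin 3) ℂ}
    (hirr : IsIrreducibleRep ρ)
    {z : ℂ} (hz : (ρ (deltaSq 3) : Matrix (Fin 3) (Fin 3) ℂ) = z • 1) (μ : ℂ) :
    finrank ℂ (End.eigenspace (toLinAlgEquiv' (ρ (σ₁ * σ₂) : Matrix (Fin 3) (Fin 3) ℂ)) μ) ≤ 1 := by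
  set Q := toLinAlgEquiv' (ρ (σ₁ * σ₂) : Matrix (Fin 3) (Fin 3) ℂ)
  set Y := toLinAlgEquiv' (ρ (σ₁ * σ₂ * σ₁) : Matrix (Fin 3) (Fin 3) ℂ)
  obtain ⟨s, rfl⟩ := IsAlgClosed.exists_pow_nat_eq z two_pos
  have hY : Y ^ 2 = algebraMap ℂ _ (s ^ 2) := by
    refine toLinAlgEquiv'_pow_eq_algebraMap ?_
    rw [← Units.val_pow_eq_pow_val, ← map_pow, ← deltaSq_three_eq_sq, hz]
  have hsum :=
    End.finrank_le_sum_finrank_eigenspace (IsPrimitiveRoot.neg_one 0 two_ne_zero.symm) hY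
  rw [finrank_fin_fun, Finset.sum_range_succ, Finset.sum_range_one, pow_zero, one_mul, pow_one,
    neg_one_mul] at hsum
  obtain ⟨ν, hν⟩ : ∃ ν, 2 ≤ finrank ℂ (End.eigenspace Y ν) := by
    by_contra! h
    have := h s
    have := h (-s)
    omega
  by_contra! hμ
  have hmeet : ¬ Disjoint (End.eigenspace Q μ) (End.eigenspace Y ν) := fun hd ↦ by
    have := Submodule.finrank_add_finrank_le_of_disjoint hd
    rw [finrank_fin_fun] at this
    omega
  obtain ⟨v, hvQ, hvY, hv0⟩ : ∃ v ∈ End.eigenspace Q μ, v ∈ End.eigenspace Y ν ∧ v ≠ 0 := by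
    simpa [Submodule.disjoint_def] using hmeet
  refine not_isIrreducibleRep_of_forall_mulVec_eq_smul (by norm_num) ρ
    closure_braidGen_products_eq_top hv0 ?_ hirr
  rintro g (rfl | rfl)
  · exact ⟨μ, by rw [← toLinAlgEquiv'_apply]; exact End.mem_eigenspace_iff.1 hvQ⟩
  · exact ⟨ν, by rw [← toLinAlgEquiv'_apply]; exact End.mem_eigenspace_iff.1 hvY⟩

/-- for an irreducible 3-dimensional representation of `B₃` with `ρ(σ₁)`
diagonalizable with eigenvalues `α₁, α₂, α₃` and `ρ(Δ₃²) = z·I`, one has `z = (α₁α₂α₃)²`. -/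
theorem braid3_scalar_dim3 (ρ : BraidGroup 3 →* Matrix.GeneralLinearGroup (Fin 3) ℂ)
    (hirr : IsIrreducibleRep ρ) (α₁ α₂ α₃ : ℂ)
    (hdiag : ∃ C : Matrix.GeneralLinearGroup (Fin 3) ℂ,
      (ρ (braidGen 0) : Matrix (Fin 3) (Fin 3) ℂ) =
        (C : Matrix (Fin 3) (Fin 3) ℂ) * Matrix.diagonal ![α₁, α₂, α₃] *
          (C⁻¹ : Matrix (Fin 3) (Fin 3) ℂ))
    (z : ℂ)
    (hz : (ρ (deltaSq 3) : Matrix (Fin 3) (Fin 3) ℂ) = z • (1 : Matrix (Fin 3) (Fin 3) ℂ)) :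
    z = (α₁ * α₂ * α₃) ^ 2 := by
  set Q := (ρ (σ₁ * σ₂) : Matrix (Fin 3) (Fin 3) ℂ)
  have hdetσ₁ : (ρ σ₁ : Matrix (Fin 3) (Fin 3) ℂ).det = α₁ * α₂ * α₃ := by
    obtain ⟨C, hC⟩ := hdiag
    rw [hC, det_conj C.isUnit, det_diagonal, Fin.prod_univ_three]
    rfl
  have hdetQ : Q.det = (α₁ * α₂ * α₃) ^ 2 := by rw [det_map_braidGen_mul_braidGen, hdetσ₁]
  have hQ3 : Q ^ 3 = z • 1 := by rw [← hz, deltaSq_three_eq_cube, map_pow, Units.val_pow_eq_pow_val]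
  have hz0 : z ≠ 0 := by
    rintro rfl
    have h := congrArg det hQ3
    rw [det_pow, zero_smul, det_zero] at h
    exact (isUnit_det_of_invertible Q).ne_zero (pow_eq_zero_iff three_ne_zero |>.1 h)
  obtain ⟨c, rfl⟩ := IsAlgClosed.exists_pow_nat_eq z three_pos
  have hchar := End.charpoly_eq_X_pow_sub_C (finrank_fin_fun ℂ)
    (Complex.isPrimitiveRoot_exp 3 three_ne_zero) ((pow_ne_zero_iff three_ne_zero).1 hz0)
    (toLinAlgEquiv'_pow_eq_algebraMap hQ3) (hirr.finrank_eigenspace_le_one hz)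
  calc c ^ 3 = LinearMap.det (toLinAlgEquiv' Q) := by
        rw [LinearMap.det_eq_sign_charpoly_coeff, hchar, coeff_sub, coeff_X_pow, coeff_C_zero,
          finrank_fin_fun]
        norm_num
    _ = (α₁ * α₂ * α₃) ^ 2 := (LinearMap.det_toLin' Q).trans hdetQ
end

section
/- Let X and Y be finite sets, μ ∈ Y, λ ∈ X, and γ ∈ ℂ. Let P be a complex matrix indexed by X × Y with P_{(α,β),(α′,β′)} = 0 unless β = β′ = μ, and let A and A′ be complex matrices indexed by X × Y with A_{(α,β),(α′,β′)} = 0 = A′_{(α,β),(α′,β′)} whenever α ≠ α′. Assume PAP = γP and PA′P = γP, that A and A′ have equal diagonal entries at (ν,μ) for every ν ∈ X with ν ≠ λ, and that there exists an index u with P_{u,(λ,μ)} · P_{(λ,μ),u} ≠ 0. Then A_{(λ,μ),(λ,μ)} = A′_{(λ,μ),(λ,μ)}. -/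
/-!
Subtracting the two relations gives `P (A - A') P = 0`. Because `P` only sees second
coordinate `μ` and `A - A'` is block diagonal in the first coordinate, the `(u,u)` entry of
`P (A - A') P` is `∑ ν, P u (ν,μ) (A - A')(ν,μ)(ν,μ) P (ν,μ) u`, and by hypothesis only the
term `ν = λ` survives; its coefficient `P u (λ,μ) P (λ,μ) u` is nonzero.
-/

theorem Fintype.sum_prod_eq_sum_of_snd_ne {X Y R : Type*} [Fintype X] [Fintype Y]
    [AddCommMonoid R] {f : X × Y → R} (μ : Y)
    (hf : ∀ p : X × Y, p.2 ≠ μ → f p = 0) : ∑ p, f p = ∑ ν, f (ν, μ) := by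
  rw [Fintype.sum_prod_type]
  exact Finset.sum_congr rfl fun ν _ =>
    Fintype.sum_eq_single μ fun y hy => hf (ν, y) hy

namespace Matrix

variable {X Y R : Type*} [Fintype X] [Fintype Y]

theorem mul_mul_apply_of_snd_support_of_fst_blockDiagonal [NonUnitalNonAssocSemiring R]
    {P B : Matrix (X × Y) (X × Y) R} {μ : Y}
    (hP : ∀ p p' : X × Y, ¬(p.2 = μ ∧ p'.2 = μ) → P p p' = 0)
    (hB : ∀ p p' : X × Y, p.1 ≠ p'.1 → B p p' = 0) (u u' : X × Y) :
    (P * B * P) u u' = ∑ ν, P u (ν, μ) * B (ν, μ) (ν, μ) * P (ν, μ) u' := by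
  have hPl : ∀ p : X × Y, p.2 ≠ μ → P u p = 0 := fun p hp => hP u p fun h => hp h.2
  have hPr : ∀ p : X × Y, p.2 ≠ μ → P p u' = 0 := fun p hp => hP p u' fun h => hp h.1
  rw [mul_apply, Fintype.sum_prod_eq_sum_of_snd_ne μ fun p hp => by rw [hPr p hp, mul_zero]]
  refine Finset.sum_congr rfl fun ν _ => ?_
  rw [mul_apply, Finset.sum_mul,
    Fintype.sum_prod_eq_sum_of_snd_ne μ fun p hp => by rw [hPl p hp, zero_mul, zero_mul],
    Fintype.sum_eq_single ν fun ν' hν' => by rw [hB (ν', μ) (ν, μ) hν', mul_zero, zero_mul]]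

end Matrix

theorem projection_diagonal_entry_general (X Y : Type*) [Fintype X] [Fintype Y]
    (μ : Y) (lam : X) (γ : ℂ)
    (P A A' : Matrix (X × Y) (X × Y) ℂ)
    (hP : ∀ p p' : X × Y, ¬(p.2 = μ ∧ p'.2 = μ) → P p p' = 0)
    (hA : ∀ p p' : X × Y, p.1 ≠ p'.1 → A p p' = 0)
    (hA' : ∀ p p' : X × Y, p.1 ≠ p'.1 → A' p p' = 0)
    (h1 : P * A * P = γ • P) (h2 : P * A' * P = γ • P)
    (hdiag : ∀ ν : X, ν ≠ lam → A (ν, μ) (ν, μ) = A' (ν, μ) (ν, μ))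
    (hu : ∃ u : X × Y, P u (lam, μ) * P (lam, μ) u ≠ 0) :
    A (lam, μ) (lam, μ) = A' (lam, μ) (lam, μ) := by
  obtain ⟨u, hu⟩ := hu
  have hPDP : P * (A - A') * P = 0 := by rw [Matrix.mul_sub, Matrix.sub_mul, h1, h2, sub_self]
  have hD : ∀ p p' : X × Y, p.1 ≠ p'.1 → (A - A') p p' = 0 := fun p p' h => by
    rw [Matrix.sub_apply, hA p p' h, hA' p p' h, sub_self]
  have hentry := Matrix.mul_mul_apply_of_snd_support_of_fst_blockDiagonal hP hD u u
  rw [hPDP, Matrix.zero_apply, Fintype.sum_eq_single lam fun ν hν => by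
    rw [Matrix.sub_apply, hdiag ν hν, sub_self, mul_zero, zero_mul]] at hentry
  have hzero : (P u (lam, μ) * P (lam, μ) u) * (A - A') (lam, μ) (lam, μ) = 0 := by
    rw [hentry]; ring
  exact sub_eq_zero.1 ((mul_eq_zero.1 hzero).resolve_left hu)

/-- the matrix content of Lemma 4.10 of the paper. If `P` is supported on
pairs with second coordinate `μ`, `A` and `A'` are block diagonal in the first coordinate,
`PAP = γP = PA'P`, `A` and `A'` have the same diagonal entries at `(ν,μ)` for `ν ≠ λ`, and
some entry product `P_{u,(λ,μ)}·P_{(λ,μ),u}` is nonzero, then `A` and `A'` also have the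
same diagonal entry at `(λ,μ)`. -/
theorem projection_diagonal_entry (X Y : Type*) [Fintype X] [Fintype Y]
    [DecidableEq X] [DecidableEq Y] (μ : Y) (lam : X) (γ : ℂ)
    (P A A' : Matrix (X × Y) (X × Y) ℂ)
    (hP : ∀ p p' : X × Y, ¬(p.2 = μ ∧ p'.2 = μ) → P p p' = 0)
    (hA : ∀ p p' : X × Y, p.1 ≠ p'.1 → A p p' = 0)
    (hA' : ∀ p p' : X × Y, p.1 ≠ p'.1 → A' p p' = 0)
    (h1 : P * A * P = γ • P) (h2 : P * A' * P = γ • P)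
    (hdiag : ∀ ν : X, ν ≠ lam → A (ν, μ) (ν, μ) = A' (ν, μ) (ν, μ))
    (hu : ∃ u : X × Y, P u (lam, μ) * P (lam, μ) u ≠ 0) :
    A (lam, μ) (lam, μ) = A' (lam, μ) (lam, μ) :=
  projection_diagonal_entry_general X Y μ lam γ P A A' hP hA hA' h1 h2 hdiag hu
end
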